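/- arXiv:1512.04051 — 2 statements merged into one kernel-verified Lean document; each statement's English description precedes it below -/
import Mathlib

section
/- Let F be a finite set, q : F → ℝ with q_f ≥ 0 for all f, s⁰ > 0, λ⁰ ≥ 0, η < 0, φ : F → ℝ, and θ : F → ℝ with 0 ≤ θ_f ≤ 1 for every f. Suppose the KKT complementarity condition holds at the anchor point for every trader f ∈ F. Then for every pair of traders f, g ∈ F with q_f > 0 and q_g = 0 one has φ_f ≤ λ⁰ ≤ φ_g; in particular, if both F⁺ = {f : q_f > 0} and F⁰ = {f : q_f = 0} are nonempty, then max_{f∈F⁺} φ_f ≤ min_{g∈F⁰} φ_g, so the admissible anchor-price range [max_{F⁺} φ, min_{F⁰} φ] is nonempty. -/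
/-!
Since `η < 0`, the inverse-demand slope `λ⁰ / (s⁰ η)` is nonpositive, so for a supplier the markup
term `-θ_f · slope · q_f` is nonnegative and the binding KKT equality gives `φ_f ≤ λ⁰`. For a
non-supplier the feasibility inequality at `q_g = 0` reads `λ⁰ ≤ φ_g`. Then `λ⁰` separates the two
groups, which bounds the max over `F⁺` by the min over `F⁰`.
-/

section Complementarity

variable {lam φ θ b q : ℝ}

theorem cost_le_price_of_complementarity (hθ : 0 ≤ θ) (hb : b ≤ 0)
    (hcomp : (-lam - θ * b * q + φ) * q = 0) (hq : 0 < q) : φ ≤ lam := by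
  have hbinding : -lam - θ * b * q + φ = 0 :=
    (mul_eq_zero.mp hcomp).resolve_right hq.ne'
  have hmarkup : θ * b * q ≤ 0 :=
    mul_nonpos_of_nonpos_of_nonneg (mul_nonpos_of_nonneg_of_nonpos hθ hb) hq.le
  linarith

theorem price_le_cost_of_dual_feasible (hdual : -lam - θ * b * q + φ ≥ 0) (hq : q = 0) :
    lam ≤ φ := by
  subst hq
  linarith

end Complementarity

theorem inverse_demand_slope_nonpos {s0 lam0 eta : ℝ} (hs0 : 0 < s0) (hlam : 0 ≤ lam0)
    (heta : eta < 0) : lam0 / (s0 * eta) ≤ 0 :=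
  div_nonpos_of_nonneg_of_nonpos hlam (mul_neg_of_pos_of_neg hs0 heta).le

theorem stmt_6_general {F : Type*} [Fintype F]
    (q φ θ : F → ℝ)
    (s0 lam0 eta : ℝ) (hs0 : 0 < s0) (hlam : 0 ≤ lam0) (heta : eta < 0)
    (hθ : ∀ f, 0 ≤ θ f ∧ θ f ≤ 1)
    (hkkt : ∀ f, -lam0 - θ f * (lam0 / (s0 * eta)) * q f + φ f ≥ 0 ∧ q f ≥ 0 ∧
      (-lam0 - θ f * (lam0 / (s0 * eta)) * q f + φ f) * q f = 0) :
    (∀ f g, 0 < q f → q g = 0 → φ f ≤ lam0 ∧ lam0 ≤ φ g) ∧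
      ∀ (h1 : (Finset.univ.filter fun f => 0 < q f).Nonempty)
        (h2 : (Finset.univ.filter fun f => q f = 0).Nonempty),
        (Finset.univ.filter fun f => 0 < q f).sup' h1 φ ≤
          (Finset.univ.filter fun f => q f = 0).inf' h2 φ := by
  have hslope := inverse_demand_slope_nonpos hs0 hlam heta
  have hsupplier : ∀ f, 0 < q f → φ f ≤ lam0 := fun f hf =>
    cost_le_price_of_complementarity (hθ f).1 hslope (hkkt f).2.2 hf
  have hidle : ∀ g, q g = 0 → lam0 ≤ φ g := fun g hg =>
    price_le_cost_of_dual_feasible (hkkt g).1 hg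
  refine ⟨fun f g hf hg => ⟨hsupplier f hf, hidle g hg⟩, fun h1 h2 => ?_⟩
  exact (Finset.sup'_le _ _ fun f hf => hsupplier f (Finset.mem_filter.mp hf).2).trans
    (Finset.le_inf' _ _ fun g hg => hidle g (Finset.mem_filter.mp hg).2)

/-- With market power parameters in [0,1] and the KKT conditions
    at the anchor point, every supplying trader's marginal cost is at most λ⁰,
    which is at most every non-supplying trader's marginal cost; hence the
    admissible anchor-price range [max_{F⁺} φ, min_{F⁰} φ] is nonempty. -/
theorem stmt_6 {F : Type*} [Fintype F]
    (q φ θ : F → ℝ) (hq : ∀ f, 0 ≤ q f)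
    (s0 lam0 eta : ℝ) (hs0 : 0 < s0) (hlam : 0 ≤ lam0) (heta : eta < 0)
    (hθ : ∀ f, 0 ≤ θ f ∧ θ f ≤ 1)
    (hkkt : ∀ f, -lam0 - θ f * (lam0 / (s0 * eta)) * q f + φ f ≥ 0 ∧ q f ≥ 0 ∧
      (-lam0 - θ f * (lam0 / (s0 * eta)) * q f + φ f) * q f = 0) :
    (∀ f g, 0 < q f → q g = 0 → φ f ≤ lam0 ∧ lam0 ≤ φ g) ∧
      ∀ (h1 : (Finset.univ.filter fun f => 0 < q f).Nonempty)
        (h2 : (Finset.univ.filter fun f => q f = 0).Nonempty),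
        (Finset.univ.filter fun f => 0 < q f).sup' h1 φ ≤
          (Finset.univ.filter fun f => q f = 0).inf' h2 φ :=
  stmt_6_general q φ θ s0 lam0 eta hs0 hlam heta hθ hkkt
end

section
/- Let F be a finite set, q : F → ℝ with q_f ≥ 0 for all f and s⁰ := Σ_{f∈F} q_f > 0, let φ : F → ℝ, λ⁰ > 0, and η < 0. Assume: (i) φ_f ≤ λ⁰ for every f with q_f > 0; (ii) λ⁰ ≤ φ_f for every f with q_f = 0; and (iii) (−η)·(λ⁰ − φ_f)·s⁰ ≤ λ⁰·q_f for every f with q_f > 0. Let θ : F → ℝ be any function such that θ_f = (λ⁰ − φ_f)·s⁰·(−η)/(λ⁰·q_f) whenever q_f > 0 and 0 ≤ θ_f ≤ 1 whenever q_f = 0. Then 0 ≤ θ_f ≤ 1 for every f ∈ F, and the KKT complementarity condition holds at the anchor point (q, λ⁰) for every trader f ∈ F; that is, the equilibrium (λ⁰, q, s⁰, φ) is achieved with all market power parameters in [0,1]. -/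
/-!
For a trader with positive sales, θ_f is exactly the value that makes the first-order
condition `-λ⁰ - θ_f · λ⁰/(s⁰η) · q_f + φ_f = 0` hold, and conditions (i) and (iii) say that
this value lies in `[0, 1]`. A trader with no sales satisfies complementarity trivially, and
the remaining inequality `λ⁰ ≤ φ_f` is condition (ii).
-/

theorem calibrated_markup_nonneg {lam φ s eta q : ℝ} (hlam : 0 < lam) (hq : 0 < q)
    (hφ : φ ≤ lam) (hs : 0 ≤ s) (heta : eta ≤ 0) :
    0 ≤ (lam - φ) * s * (-eta) / (lam * q) := by
  have : 0 ≤ lam - φ := sub_nonneg.mpr hφ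
  have : 0 ≤ -eta := neg_nonneg.mpr heta
  positivity

theorem calibrated_markup_le_one {lam φ s eta q : ℝ} (hlam : 0 < lam) (hq : 0 < q)
    (h : (-eta) * (lam - φ) * s ≤ lam * q) :
    (lam - φ) * s * (-eta) / (lam * q) ≤ 1 := by
  rw [div_le_one (by positivity)]
  linarith

theorem first_order_residual_calibrated_markup_eq_zero {lam φ s eta q : ℝ} (hlam : lam ≠ 0)
    (hs : s ≠ 0) (heta : eta ≠ 0) (hq : q ≠ 0) :
    -lam - (lam - φ) * s * (-eta) / (lam * q) * (lam / (s * eta)) * q + φ = 0 := by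
  field_simp
  ring

theorem stmt_8_general {F : Type*}
    (q φ θ : F → ℝ) (hq : ∀ f, 0 ≤ q f)
    (s0 : ℝ) (hs0pos : 0 < s0)
    (lam0 eta : ℝ) (hlam : 0 < lam0) (heta : eta < 0)
    (h1 : ∀ f, 0 < q f → φ f ≤ lam0)
    (h2 : ∀ f, q f = 0 → lam0 ≤ φ f)
    (h3 : ∀ f, 0 < q f → (-eta) * (lam0 - φ f) * s0 ≤ lam0 * q f)
    (hθpos : ∀ f, 0 < q f → θ f = (lam0 - φ f) * s0 * (-eta) / (lam0 * q f))
    (hθzero : ∀ f, q f = 0 → 0 ≤ θ f ∧ θ f ≤ 1) :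
    (∀ f, 0 ≤ θ f ∧ θ f ≤ 1) ∧
      ∀ f, -lam0 - θ f * (lam0 / (s0 * eta)) * q f + φ f ≥ 0 ∧ q f ≥ 0 ∧
        (-lam0 - θ f * (lam0 / (s0 * eta)) * q f + φ f) * q f = 0 := by
  refine ⟨fun f => ?_, fun f => ?_⟩ <;> rcases (hq f).eq_or_lt with hqf | hqf
  · exact hθzero f hqf.symm
  · rw [hθpos f hqf]
    exact ⟨calibrated_markup_nonneg hlam hqf (h1 f hqf) hs0pos.le heta.le,
      calibrated_markup_le_one hlam hqf (h3 f hqf)⟩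
  · rw [← hqf]
    simpa using h2 f hqf.symm
  · rw [hθpos f hqf, first_order_residual_calibrated_markup_eq_zero hlam.ne' hs0pos.ne'
      heta.ne hqf.ne']
    simpa using hq f

/-- If λ⁰ lies in the admissible anchor-price range and (−η) in
    the admissible elasticity range, then the calibrated market power
    parameters lie in [0,1] and the KKT complementarity conditions hold at the
    anchor point for every trader: the equilibrium (λ⁰, q, s⁰, φ) is achieved. -/
theorem stmt_8 {F : Type*} [Fintype F]
    (q φ θ : F → ℝ) (hq : ∀ f, 0 ≤ q f)
    (s0 : ℝ) (hs0 : s0 = ∑ f, q f) (hs0pos : 0 < s0)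
    (lam0 eta : ℝ) (hlam : 0 < lam0) (heta : eta < 0)
    (h1 : ∀ f, 0 < q f → φ f ≤ lam0)
    (h2 : ∀ f, q f = 0 → lam0 ≤ φ f)
    (h3 : ∀ f, 0 < q f → (-eta) * (lam0 - φ f) * s0 ≤ lam0 * q f)
    (hθpos : ∀ f, 0 < q f → θ f = (lam0 - φ f) * s0 * (-eta) / (lam0 * q f))
    (hθzero : ∀ f, q f = 0 → 0 ≤ θ f ∧ θ f ≤ 1) :
    (∀ f, 0 ≤ θ f ∧ θ f ≤ 1) ∧
      ∀ f, -lam0 - θ f * (lam0 / (s0 * eta)) * q f + φ f ≥ 0 ∧ q f ≥ 0 ∧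
        (-lam0 - θ f * (lam0 / (s0 * eta)) * q f + φ f) * q f = 0 :=
  stmt_8_general q φ θ hq s0 hs0pos lam0 eta hlam heta h1 h2 h3 hθpos hθzero
end
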